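/- In a well-formed delayed structured tree with realisation (L(T), <, ≺), for every equivalence class A of the indistinguishability relation, the set L(A) = ⋃_{x ∈ A} L(x) of leaves below the nodes of A is an interval of the linear order ≺. -/
import Mathlib


/-- Raw data of a delayed structured tree: a rooted tree with node set `V`
(given by a parent function and a depth function), a linear order `llt` (`<`)
on its leaves, and for each node `t` a linear order `pre t` (`≺_t`) on the
grandchildren of `t`. -/
structure PreDTree (V : Type*) where
  root : V
  parent : V → V
  depth : V → ℕ
  llt : V → V → Prop
  pre : V → V → V → Prop

namespace PreDTree

variable {V : Type*} (T : PreDTree V)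

/-- `u` is an ancestor of (or equal to) `v`. -/
def anc (u v : V) : Prop := ∃ k : ℕ, T.parent^[k] v = u

/-- `v` is a leaf: it has no proper child. -/
def isLeaf (v : V) : Prop := ∀ u, T.parent u = v → u = v

/-- `u` is a child of `t`. -/
def isChild (u t : V) : Prop := T.parent u = t ∧ u ≠ t

/-- `u` is a grandchild of `t`. -/
def isGrandchild (u t : V) : Prop :=
  T.isChild u (T.parent u) ∧ T.isChild (T.parent u) t

/-- `u` and `v` are (distinct) siblings. -/
def siblings (u v : V) : Prop :=
  u ≠ v ∧ T.isChild u (T.parent u) ∧ T.isChild v (T.parent v) ∧ T.parent u = T.parent v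

/-- The set `L(t)` of leaves below `t`. -/
def leavesBelow (t : V) : Set V := {x | T.isLeaf x ∧ T.anc t x}

/-- The realised order `≺` on the leaves: `x ≺ y` iff `x' ≺_t y'` where `t` is the
closest common ancestor of `x, y` and `x', y'` are the grandchildren of `t`
(lying below distinct children of `t`) above `x, y` respectively. -/
def realLT (x y : V) : Prop :=
  ∃ t x' y', T.isGrandchild x' t ∧ T.isGrandchild y' t ∧ T.parent x' ≠ T.parent y' ∧
    T.anc x' x ∧ T.anc y' y ∧ T.pre t x' y'

/-- Extension of `≺` to nodes: all leaves below `u` are `≺`-below all leaves below `v`. -/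
def nodeLT (u v : V) : Prop :=
  (T.leavesBelow u).Nonempty ∧ (T.leavesBelow v).Nonempty ∧
    ∀ x ∈ T.leavesBelow u, ∀ y ∈ T.leavesBelow v, T.realLT x y

/-- Extension of the leaf order `<` to nodes. -/
def nodeLLT (u v : V) : Prop :=
  (T.leavesBelow u).Nonempty ∧ (T.leavesBelow v).Nonempty ∧
    ∀ x ∈ T.leavesBelow u, ∀ y ∈ T.leavesBelow v, T.llt x y

/-- The leaf `v` distinguishes the siblings `u, w`: `u ≺ v ≺ w` or `w ≺ v ≺ u`. -/
def distinguishes (v u w : V) : Prop :=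
  (T.nodeLT u v ∧ T.nodeLT v w) ∨ (T.nodeLT w v ∧ T.nodeLT v u)

/-- `u` and `w` are indistinguishable: `u = w`, or they are siblings not distinguished
by any leaf outside the leaves below their common parent. -/
def Indist (u w : V) : Prop :=
  u = w ∨ (T.siblings u w ∧
    ∀ v, T.isLeaf v → v ∉ T.leavesBelow (T.parent u) → ¬ T.distinguishes v u w)

/-- The realisation `≺` of the tree is a (strict) linear order on the leaves. -/
def WellFormed : Prop :=
  (∀ x, ¬ T.realLT x x) ∧
  (∀ x y z, T.realLT x y → T.realLT y z → T.realLT x z) ∧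
  (∀ x y, T.isLeaf x → T.isLeaf y → x ≠ y → T.realLT x y ∨ T.realLT y x)

end PreDTree

/-- The axioms of a delayed structured tree: the parent/depth data describe a rooted
tree, `llt` is a linear order on the leaves compatible with the tree, every leaf is an
only child, and each `pre t` is a linear order on the grandchildren of `t`. -/
structure IsDelayedTree {V : Type*} (T : PreDTree V) : Prop where
  parent_root : T.parent T.root = T.root
  depth_root : T.depth T.root = 0
  depth_parent : ∀ v, v ≠ T.root → T.depth (T.parent v) + 1 = T.depth v
  llt_irrefl : ∀ x, ¬ T.llt x x
  llt_trans : ∀ x y z, T.llt x y → T.llt y z → T.llt x z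
  llt_total : ∀ x y, T.isLeaf x → T.isLeaf y → x ≠ y → T.llt x y ∨ T.llt y x
  llt_dom : ∀ x y, T.llt x y → T.isLeaf x ∧ T.isLeaf y
  llt_compatible : ∀ t, ∀ x ∈ T.leavesBelow t, ∀ z ∈ T.leavesBelow t, ∀ y,
    T.llt x y → T.llt y z → y ∈ T.leavesBelow t
  leaf_only_child : ∀ x u, T.isLeaf x → T.isChild u (T.parent x) → u = x
  pre_irrefl : ∀ t x, ¬ T.pre t x x
  pre_trans : ∀ t x y z, T.pre t x y → T.pre t y z → T.pre t x z
  pre_total : ∀ t x y, T.isGrandchild x t → T.isGrandchild y t → x ≠ y →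
    T.pre t x y ∨ T.pre t y x
  pre_dom : ∀ t x y, T.pre t x y → T.isGrandchild x t ∧ T.isGrandchild y t

namespace PreDTree

variable {V : Type*} {T : PreDTree V}

theorem anc_refl' (v : V) : T.anc v v := ⟨0, rfl⟩

theorem anc_trans' {u v w : V} (h1 : T.anc u v) (h2 : T.anc v w) : T.anc u w := by
  obtain ⟨k, hk⟩ := h1; obtain ⟨m, hm⟩ := h2
  exact ⟨k + m, by rw [Function.iterate_add_apply, hm, hk]⟩

theorem anc_parent' (v : V) : T.anc (T.parent v) v := ⟨1, rfl⟩

theorem anc_total' {s y x : V} (h1 : T.anc s x) (h2 : T.anc y x) :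
    T.anc s y ∨ T.anc y s := by
  obtain ⟨k, hk⟩ := h1; obtain ⟨m, hm⟩ := h2
  rcases le_total k m with h | h
  · right
    exact ⟨m - k, by rw [← hk, ← Function.iterate_add_apply, Nat.sub_add_cancel h, hm]⟩
  · left
    exact ⟨k - m, by rw [← hm, ← Function.iterate_add_apply, Nat.sub_add_cancel h, hk]⟩

theorem leaf_anc_eq' {v x : V} (hv : T.isLeaf v) (h : T.anc v x) : x = v := by
  have H : ∀ k x, T.parent^[k] x = v → x = v := by
    intro k
    induction k with
    | zero => intro x hx; exact hx
    | succ n ih =>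
      intro x hx
      rw [Function.iterate_succ_apply] at hx
      exact hv x (ih _ hx)
  obtain ⟨k, hk⟩ := h
  exact H k x hk

theorem exists_child_anc' {p b : V} (h : T.anc p b) (hne : b ≠ p) :
    ∃ z, T.parent z = p ∧ z ≠ p ∧ T.anc z b := by
  have H : ∀ k b, T.parent^[k] b = p → b ≠ p → ∃ z, T.parent z = p ∧ z ≠ p ∧ T.anc z b := by
    intro k
    induction k with
    | zero => intro b hk hne; exact absurd hk hne
    | succ n ih =>
      intro b hk hne
      rw [Function.iterate_succ_apply] at hk
      by_cases hp : T.parent b = p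
      · exact ⟨b, hp, hne, anc_refl' b⟩
      · obtain ⟨z, h1, h2, h3⟩ := ih _ hk hp
        exact ⟨z, h1, h2, anc_trans' h3 (anc_parent' b)⟩
  obtain ⟨k, hk⟩ := h
  exact H k b hk hne

theorem depth_zero_root' (hT : IsDelayedTree T) {v : V} (h : T.depth v = 0) :
    v = T.root := by
  by_contra hne
  have := hT.depth_parent v hne
  omega

theorem root_anc' (hT : IsDelayedTree T) (v : V) : T.anc T.root v := by
  have H : ∀ n v, T.depth v = n → T.parent^[n] v = T.root := by
    intro n
    induction n with
    | zero => intro v h; simpa using depth_zero_root' hT h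
    | succ n ih =>
      intro v h
      have hne : v ≠ T.root := by
        intro hr; rw [hr, hT.depth_root] at h; omega
      have hd : T.depth (T.parent v) = n := by
        have := hT.depth_parent v hne; omega
      rw [Function.iterate_succ_apply]
      exact ih _ hd
  exact ⟨T.depth v, H _ v rfl⟩

theorem exists_leaf_below' [Fintype V] (hT : IsDelayedTree T) (t : V) :
    (T.leavesBelow t).Nonempty := by
  have H : ∀ n t, Finset.univ.sup T.depth < T.depth t + n → (T.leavesBelow t).Nonempty := by
    intro n
    induction n with
    | zero =>
      intro t h
      have := Finset.le_sup (f := T.depth) (Finset.mem_univ t)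
      omega
    | succ n ih =>
      intro t h
      by_cases hl : T.isLeaf t
      · exact ⟨t, hl, anc_refl' t⟩
      · obtain ⟨u, hu1, hu2⟩ : ∃ u, T.parent u = t ∧ u ≠ t := by
          simpa [PreDTree.isLeaf] using hl
        have hur : u ≠ T.root := by
          intro hroot
          rw [hroot, hT.parent_root] at hu1
          exact hu2 (hroot.trans hu1)
        have hd : T.depth u = T.depth t + 1 := by
          rw [← hT.depth_parent u hur, hu1]
        obtain ⟨x, hx⟩ := ih u (by omega)
        exact ⟨x, hx.1, anc_trans' ⟨1, hu1⟩ hx.2⟩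
  exact H (Finset.univ.sup T.depth + 1) t (by omega)

/-- The key structural lemma: if `g` is a grandchild of `s`, `v` lies below `s` but not
below `T.parent y`, and `g, y` are both ancestors of `l`, then `g` is an ancestor of `y`. -/
theorem key_anc {s g y v l : V} (hg : T.isGrandchild g s) (hsv : T.anc s v)
    (hgl : T.anc g l) (hyl : T.anc y l) (hv : ¬ T.anc (T.parent y) v) : T.anc g y := by
  rcases anc_total' hgl hyl with h | h
  · exact h
  · obtain ⟨k, hk⟩ := h
    match k, hk with
    | 0, hk => exact hk ▸ anc_refl' g
    | 1, hk =>
      -- hk : T.parent g = y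
      exfalso
      have hpy : T.parent y = s := by
        rw [← hk]; exact hg.2.1
      exact hv (by rw [hpy]; exact hsv)
    | (n + 2), hk =>
      exfalso
      have hk' : T.parent^[n] s = y := by
        have h1 : T.parent^[n + 2] g = T.parent^[n] (T.parent (T.parent g)) := by
          rw [Function.iterate_succ_apply, Function.iterate_succ_apply]
        rw [h1, hg.2.1] at hk
        exact hk
      have hys : T.anc y s := ⟨n, hk'⟩
      exact hv (anc_trans' (anc_parent' y) (anc_trans' hys hsv))

theorem realLT_all {l v y x : V} (hlv : T.realLT l v) (hyl : T.anc y l)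
    (hv : ¬ T.anc (T.parent y) v) (hx : T.anc y x) : T.realLT x v := by
  obtain ⟨s, g, b', hg, hb, hne, hgl, hbv, hpre⟩ := hlv
  have hsv : T.anc s v := anc_trans' ⟨2, hb.2.1⟩ hbv
  have hgy : T.anc g y := key_anc hg hsv hgl hyl hv
  exact ⟨s, g, b', hg, hb, hne, anc_trans' hgy hx, hbv, hpre⟩

theorem realLT_all' {l v y x : V} (hvl : T.realLT v l) (hyl : T.anc y l)
    (hv : ¬ T.anc (T.parent y) v) (hx : T.anc y x) : T.realLT v x := by
  obtain ⟨s, b', g, hb, hg, hne, hbv, hgl, hpre⟩ := hvl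
  have hsv : T.anc s v := anc_trans' ⟨2, hb.2.1⟩ hbv
  have hgy : T.anc g y := key_anc hg hsv hgl hyl hv
  exact ⟨s, b', g, hb, hg, hne, hbv, anc_trans' hgy hx, hpre⟩

theorem nodeLT_mk_right {y v l : V} (hl : l ∈ T.leavesBelow y) (hvleaf : T.isLeaf v)
    (hv : ¬ T.anc (T.parent y) v) (hlv : T.realLT l v) : T.nodeLT y v := by
  refine ⟨⟨l, hl⟩, ⟨v, hvleaf, anc_refl' v⟩, fun x hx z hz => ?_⟩
  have hzv : z = v := leaf_anc_eq' hvleaf hz.2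
  subst hzv
  exact realLT_all hlv hl.2 hv hx.2

theorem nodeLT_mk_left {y v l : V} (hl : l ∈ T.leavesBelow y) (hvleaf : T.isLeaf v)
    (hv : ¬ T.anc (T.parent y) v) (hvl : T.realLT v l) : T.nodeLT v y := by
  refine ⟨⟨v, hvleaf, anc_refl' v⟩, ⟨l, hl⟩, fun x hx z hz => ?_⟩
  have hxv : x = v := leaf_anc_eq' hvleaf hx.2
  subst hxv
  exact realLT_all' hvl hl.2 hv hz.2

end PreDTree

/-- In a well-formed delayed structured tree, for every equivalence class `A` of the
indistinguishability relation, the set `L(A)` of leaves below the nodes of `A` is an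
interval of the realised linear order `≺`. -/
theorem indist_class_interval {V : Type*} [Fintype V] (T : PreDTree V)
    (hT : IsDelayedTree T) (hW : T.WellFormed) (x₀ : V) :
    ∀ a ∈ ⋃ x ∈ {y | T.Indist x₀ y}, T.leavesBelow x,
    ∀ c ∈ ⋃ x ∈ {y | T.Indist x₀ y}, T.leavesBelow x,
    ∀ b, T.isLeaf b → T.realLT a b → T.realLT b c →
      b ∈ ⋃ x ∈ {y | T.Indist x₀ y}, T.leavesBelow x := by
  intro a ha c hc b hbleaf hab hbc
  simp only [Set.mem_iUnion, Set.mem_setOf_eq] at ha hc ⊢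
  obtain ⟨u, hu, haleaf, hau⟩ := ha
  obtain ⟨w, hw, hcleaf, hcw⟩ := hc
  have hpu : T.parent u = T.parent x₀ := by
    rcases hu with rfl | ⟨hs, _⟩
    · rfl
    · exact hs.2.2.2.symm
  have hpw : T.parent w = T.parent x₀ := by
    rcases hw with rfl | ⟨hs, _⟩
    · rfl
    · exact hs.2.2.2.symm
  -- if b is below x₀, we are done
  by_cases hbx : T.anc x₀ b
  · exact ⟨x₀, Or.inl rfl, hbleaf, hbx⟩
  -- x₀ is not the root (otherwise everything is below it)
  by_cases hroot : x₀ = T.root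
  · exact absurd (hroot ▸ T.root_anc' hT b) hbx
  have hx₀np : x₀ ≠ T.parent x₀ := by
    intro h
    have := hT.depth_parent x₀ hroot
    rw [← h] at this
    omega
  by_cases hpb : T.anc (T.parent x₀) b
  · -- b is below the parent: find the child z of the parent above b
    have hbnp : b ≠ T.parent x₀ := by
      intro h
      exact hx₀np ((hbleaf x₀ h.symm).trans h)
    obtain ⟨z, hzp, hznep, hzb⟩ := PreDTree.exists_child_anc' hpb hbnp
    have hzx : z ≠ x₀ := fun h => hbx (h ▸ hzb)
    refine ⟨z, Or.inr ⟨⟨hzx.symm, ⟨rfl, hx₀np⟩, ⟨rfl, fun h => hznep (h.symm ▸ hzp)⟩,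
      hzp.symm⟩, ?_⟩, hbleaf, hzb⟩
    intro v hvleaf hvnot hdist
    have hvp : ¬ T.anc (T.parent x₀) v := fun h => hvnot ⟨hvleaf, h⟩
    rcases hdist with ⟨h1, h2⟩ | ⟨h1, h2⟩
    · -- x₀ ≺ v ≺ z : then v ≺ b ≺ c so v ≺ w, contradicting Indist x₀ w
      have hvb : T.realLT v b := h2.2.2 v ⟨hvleaf, PreDTree.anc_refl' v⟩ b ⟨hbleaf, hzb⟩
      have hvc : T.realLT v c := hW.2.1 _ _ _ hvb hbc
      have hvw : T.nodeLT v w :=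
        PreDTree.nodeLT_mk_left ⟨hcleaf, hcw⟩ hvleaf (by rw [hpw]; exact hvp) hvc
      rcases hw with rfl | ⟨hsib, hcl⟩
      · have hcv : T.realLT c v := h1.2.2 c ⟨hcleaf, hcw⟩ v ⟨hvleaf, PreDTree.anc_refl' v⟩
        exact hW.1 c (hW.2.1 _ _ _ hcv hvc)
      · exact hcl v hvleaf hvnot (Or.inl ⟨h1, hvw⟩)
    · -- z ≺ v ≺ x₀ : then a ≺ b ≺ v so u ≺ v, contradicting Indist x₀ u
      have hbv : T.realLT b v := h1.2.2 b ⟨hbleaf, hzb⟩ v ⟨hvleaf, PreDTree.anc_refl' v⟩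
      have hav : T.realLT a v := hW.2.1 _ _ _ hab hbv
      have huv : T.nodeLT u v :=
        PreDTree.nodeLT_mk_right ⟨haleaf, hau⟩ hvleaf (by rw [hpu]; exact hvp) hav
      rcases hu with rfl | ⟨hsib, hcl⟩
      · have hva : T.realLT v a := h2.2.2 v ⟨hvleaf, PreDTree.anc_refl' v⟩ a ⟨haleaf, hau⟩
        exact hW.1 a (hW.2.1 _ _ _ hav hva)
      · exact hcl v hvleaf hvnot (Or.inr ⟨huv, h2⟩)
  · -- b is not below the parent: contradiction via comparability with x₀
    exfalso
    have hub : T.nodeLT u b :=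
      PreDTree.nodeLT_mk_right ⟨haleaf, hau⟩ hbleaf (by rw [hpu]; exact hpb) hab
    have hbw : T.nodeLT b w :=
      PreDTree.nodeLT_mk_left ⟨hcleaf, hcw⟩ hbleaf (by rw [hpw]; exact hpb) hbc
    obtain ⟨l0, hl0⟩ := PreDTree.exists_leaf_below' hT x₀
    have hl0b : l0 ≠ b := by
      intro h
      exact hpb (h ▸ PreDTree.anc_trans' (PreDTree.anc_parent' x₀) hl0.2)
    have hbnot : b ∉ T.leavesBelow (T.parent x₀) := fun h => hpb h.2
    rcases hW.2.2 l0 b hl0.1 hbleaf hl0b with h | h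
    · have hx₀b : T.nodeLT x₀ b := PreDTree.nodeLT_mk_right hl0 hbleaf hpb h
      rcases hw with rfl | ⟨hsib, hcl⟩
      · have hcb : T.realLT c b := hx₀b.2.2 c ⟨hcleaf, hcw⟩ b ⟨hbleaf, PreDTree.anc_refl' b⟩
        exact hW.1 b (hW.2.1 _ _ _ hbc hcb)
      · exact hcl b hbleaf hbnot (Or.inl ⟨hx₀b, hbw⟩)
    · have hbx₀ : T.nodeLT b x₀ := PreDTree.nodeLT_mk_left hl0 hbleaf hpb h
      rcases hu with rfl | ⟨hsib, hcl⟩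
      · have hba : T.realLT b a := hbx₀.2.2 b ⟨hbleaf, PreDTree.anc_refl' b⟩ a ⟨haleaf, hau⟩
        exact hW.1 a (hW.2.1 _ _ _ hab hba)
      · exact hcl b hbleaf hbnot (Or.inr ⟨hub, hbx₀⟩)
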